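/- For the perturbed vectors v_i^ε ∈ ℝ² defined by v_i^ε = (1 - ε(n-2-2i)², ε(n-2-2i)) for even i ∈ {0, ..., n-2}, v_i^ε = ε·(1 - ε(n-2-2i)², ε(n-2-2i)) for odd i ∈ {1, ..., n-3}, and v_{n-1}^ε = (-ε, 0), with n ≥ 4 even: for all sufficiently small ε > 0 these n vectors are pairwise distinct, non-zero, and positively span ℝ². -/

import Mathlib

/-!
For small `ε` the first coordinate separates the three kinds of vectors: it is `-ε` for the
last index, lies in `(0, ε]` for odd indices and in `(ε, 1]` for even ones; within a kind the
second coordinate is an injective affine function of the index. Positive spanning only needs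
`v₀ = (a, b)`, `v_{n-2} = (a, -b)` (here evenness of `n` is used) and `v_{n-1} = (-ε, 0)`
with `a, b > 0`: any point, shifted far enough to the right, lies in the cone of `(a, b)` and
`(a, -b)`, and the shift is a multiple of `-v_{n-1}`.
-/

/-- The perturbed polygon normal vectors. -/
noncomputable def vEps (n : ℕ) (ε : ℝ) (i : Fin n) : ℝ × ℝ :=
  if (i : ℕ) = n - 1 then (-ε, 0)
  else if Even (i : ℕ) then
    (1 - ε * ((n:ℝ) - 2 - 2 * (i:ℕ)) ^ 2, ε * ((n:ℝ) - 2 - 2 * (i:ℕ)))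
  else
    ε • (1 - ε * ((n:ℝ) - 2 - 2 * (i:ℕ)) ^ 2, ε * ((n:ℝ) - 2 - 2 * (i:ℕ)))

theorem exists_nonneg_sum_smul_eq_add_add {ι R M : Type*} [Fintype ι] [DecidableEq ι]
    [Semiring R] [PartialOrder R] [IsOrderedRing R] [AddCommMonoid M] [Module R M]
    (v : ι → M) (i j k : ι) {α β γ : R} (hα : 0 ≤ α) (hβ : 0 ≤ β) (hγ : 0 ≤ γ) :
    ∃ lam : ι → R, (∀ l, 0 ≤ lam l) ∧ ∑ l, lam l • v l = α • v i + β • v j + γ • v k := by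
  refine ⟨Pi.single i α + Pi.single j β + Pi.single k γ, ?_, ?_⟩
  · have hsingle {m : ι} {c : R} (hc : 0 ≤ c) : 0 ≤ (Pi.single m c : ι → R) :=
      Pi.single_nonneg.2 hc
    exact add_nonneg (add_nonneg (hsingle hα) (hsingle hβ)) (hsingle hγ)
  · simp [add_smul, Finset.sum_add_distrib, Pi.single_apply, ite_smul]

theorem exists_nonneg_smul_add_smul_add_smul_eq {a b e : ℝ} (ha : 0 < a) (hb : 0 < b)
    (he : 0 < e) (y : ℝ × ℝ) :
    ∃ α β γ : ℝ, 0 ≤ α ∧ 0 ≤ β ∧ 0 ≤ γ ∧ α • (a, b) + β • (a, -b) + γ • (-e, 0) = y := by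
  obtain ⟨y₁, y₂⟩ := y
  have h₁ : 0 ≤ y₁ + |y₁| := by linarith [neg_abs_le y₁]
  have h₂ : 0 ≤ |y₂| + y₂ := by linarith [neg_abs_le y₂]
  have h₂' : 0 ≤ |y₂| - y₂ := by linarith [le_abs_self y₂]
  refine ⟨(y₁ + |y₁|) / (2 * a) + (|y₂| + y₂) / (2 * b),
    (y₁ + |y₁|) / (2 * a) + (|y₂| - y₂) / (2 * b), (|y₁| + a * |y₂| / b) / e,
    by positivity, by positivity, by positivity, ?_⟩
  simp only [Prod.smul_mk, Prod.mk_add_mk, smul_eq_mul, Prod.mk.injEq]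
  constructor <;> field_simp <;> ring

theorem lt_one_sub_mul_sub_two_mul_sq {ε m x : ℝ} (hεm : ε * (1 + m ^ 2) < 1)
    (hx₀ : 0 ≤ x) (hxm : x ≤ m) : ε < 1 - ε * (m - 2 * x) ^ 2 := by
  have : (m - 2 * x) ^ 2 ≤ m ^ 2 := by nlinarith
  nlinarith

section vEps

variable {n : ℕ} {ε : ℝ}

theorem lt_one_sub_mul_sq_of_ne_last (hεn : ε * (1 + ((n : ℝ) - 2) ^ 2) < 1)
    (i : Fin n) (hi : (i : ℕ) ≠ n - 1) : ε < 1 - ε * ((n : ℝ) - 2 - 2 * (i : ℕ)) ^ 2 := by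
  have hin : (i : ℕ) + 2 ≤ n := by omega
  refine lt_one_sub_mul_sub_two_mul_sq hεn (Nat.cast_nonneg _) ?_
  have : ((i : ℕ) : ℝ) + 2 ≤ n := by exact_mod_cast hin
  linarith

noncomputable def vEpsIndex (n : ℕ) (ε : ℝ) (x : ℝ × ℝ) : ℝ :=
  if x.1 < 0 then n - 1 else ((n : ℝ) - 2 - x.2 / (if x.1 ≤ ε then ε ^ 2 else ε)) / 2

theorem vEpsIndex_vEps (hε : 0 < ε) (hεn : ε * (1 + ((n : ℝ) - 2) ^ 2) < 1) (i : Fin n) :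
    vEpsIndex n ε (vEps n ε i) = (i : ℕ) := by
  unfold vEps
  split_ifs with hlast heven
  · simp [vEpsIndex, hε, hlast, Nat.cast_sub (show 1 ≤ n by omega)]
  · have hpos := lt_one_sub_mul_sq_of_ne_last hεn i hlast
    simp only [vEpsIndex, not_lt.2 (hε.trans hpos).le, not_le.2 hpos, if_false]
    field_simp
    ring
  · have hpos := lt_one_sub_mul_sq_of_ne_last hεn i hlast
    have hsq : 0 ≤ ε * ((n : ℝ) - 2 - 2 * (i : ℕ)) ^ 2 := by positivity
    have hle : ε * (1 - ε * ((n : ℝ) - 2 - 2 * (i : ℕ)) ^ 2) ≤ ε := by nlinarith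
    simp only [vEpsIndex, Prod.smul_mk, smul_eq_mul, if_pos hle,
      if_neg (not_lt.2 (mul_pos hε (hε.trans hpos)).le)]
    field_simp
    ring

theorem vEps_fst_ne_zero (hε : 0 < ε) (hεn : ε * (1 + ((n : ℝ) - 2) ^ 2) < 1) (i : Fin n) :
    (vEps n ε i).1 ≠ 0 := by
  unfold vEps
  split_ifs with hlast heven
  · simpa using hε.ne'
  · exact (hε.trans (lt_one_sub_mul_sq_of_ne_last hεn i hlast)).ne'
  · exact (mul_pos hε (hε.trans (lt_one_sub_mul_sq_of_ne_last hεn i hlast))).ne'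

theorem vEps_injective (hε : 0 < ε) (hεn : ε * (1 + ((n : ℝ) - 2) ^ 2) < 1) :
    Function.Injective (vEps n ε) := fun i j hij => Fin.ext <| by
  exact_mod_cast (vEpsIndex_vEps hε hεn i).symm.trans
    ((congrArg _ hij).trans (vEpsIndex_vEps hε hεn j))

theorem vEps_zero (hn : 2 ≤ n) :
    vEps n ε ⟨0, by omega⟩ = (1 - ε * ((n : ℝ) - 2) ^ 2, ε * ((n : ℝ) - 2)) := by
  simp [vEps, show 0 ≠ n - 1 by omega]

theorem vEps_sub_two (hn : 2 ≤ n) (hne : Even n) :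
    vEps n ε ⟨n - 2, by omega⟩ = (1 - ε * ((n : ℝ) - 2) ^ 2, -(ε * ((n : ℝ) - 2))) := by
  have heven : Even (n - 2) := (Nat.even_sub hn).2 (by simp [hne])
  simp only [vEps, show n - 2 ≠ n - 1 by omega, if_false, heven, if_true,
    Nat.cast_sub hn, Nat.cast_ofNat, Prod.mk.injEq]
  constructor <;> ring

theorem vEps_sub_one (hn : 1 ≤ n) : vEps n ε ⟨n - 1, by omega⟩ = (-ε, 0) := if_pos rfl

end vEps

/-- For all sufficiently small ε > 0 the perturbed vectors v_i^ε are
pairwise distinct, non-zero, and positively span ℝ². -/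
theorem perturbed_vectors_positively_span (n : ℕ) (hn : 4 ≤ n) (hne : Even n) :
    ∃ ε₀ > (0:ℝ), ∀ ε : ℝ, 0 < ε → ε < ε₀ →
      Function.Injective (vEps n ε) ∧
      (∀ i, vEps n ε i ≠ 0) ∧
      (∀ y : ℝ × ℝ, ∃ lam : Fin n → ℝ,
        (∀ i, 0 ≤ lam i) ∧ ∑ i, lam i • vEps n ε i = y) := by
  refine ⟨1 / (1 + ((n : ℝ) - 2) ^ 2), by positivity, fun ε hε hεε₀ => ?_⟩
  have hεn : ε * (1 + ((n : ℝ) - 2) ^ 2) < 1 := (lt_div_iff₀ (by positivity)).1 hεε₀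
  refine ⟨vEps_injective hε hεn, fun i h => vEps_fst_ne_zero hε hεn i (by rw [h]; rfl),
    fun y => ?_⟩
  have hn' : (4 : ℝ) ≤ n := by exact_mod_cast hn
  obtain ⟨α, β, γ, hα, hβ, hγ, rfl⟩ := exists_nonneg_smul_add_smul_add_smul_eq
    (a := 1 - ε * ((n : ℝ) - 2) ^ 2) (b := ε * ((n : ℝ) - 2)) (by linarith)
    (mul_pos hε (by linarith)) hε y
  rw [← vEps_zero (n := n) (by omega), ← vEps_sub_two (by omega) hne,
    ← vEps_sub_one (n := n) (by omega)]
  exact exists_nonneg_sum_smul_eq_add_add _ _ _ _ hα hβ hγ
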